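/- arXiv:2101.11494 — 2 statements merged into one kernel-verified Lean document; each statement's English description precedes it below -/
import Mathlib

section
/- Let B be a complete Boolean algebra and (P_γ)_{γ≤μ} a family of complete subalgebras of B indexed by the ordinals γ ≤ μ, with P_γ ⊆ P_δ whenever γ ≤ δ and P_μ = B. Let κ be an uncountable cardinal, D a κ-complete ultrafilter on κ, and f : κ → B a function such that supp(f(α)) is finite for every α < κ. Then the set {δ ≤ μ : for all γ < δ, {α < κ : h_δ(f(α)) = h_γ(f(α))} ∉ D} — which is the support of the class of f in the ultrapower iteration ((P_γ)^κ/D)_{γ≤μ} — is finite. -/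
/-!
Fix a sequence `γ₀ < γ₁ < ⋯` of stages at which the class of `f` moves. Each move happens on a
`D`-large set of coordinates, and `D` is closed under countable intersections, so a single
coordinate `α` moves at every `γₙ`. Since `γ ↦ h_γ(f α)` is antitone, the least stage at which it
reaches its value at `γₙ₊₁` lies in `(γₙ, γₙ₊₁]` and belongs to `supp (f α)`, which is therefore
infinite.
-/

/-- A complete subalgebra of a complete Boolean algebra: contains `⊥` and `⊤` and is closed
under complementation and arbitrary suprema and infima as computed in the ambient algebra. -/
def IsCompleteSubalg {B : Type u} [CompleteBooleanAlgebra B] (S : Set B) : Prop :=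
  ⊥ ∈ S ∧ ⊤ ∈ S ∧ (∀ x ∈ S, xᶜ ∈ S) ∧ (∀ T ⊆ S, sSup T ∈ S) ∧ (∀ T ⊆ S, sInf T ∈ S)

/-- The projection to a complete subalgebra: `h(p) = inf {x ∈ S : p ≤ x}`. -/
noncomputable def proj {B : Type u} [CompleteBooleanAlgebra B] (S : Set B) (p : B) : B :=
  sInf {x | x ∈ S ∧ p ≤ x}

theorem proj_antitone {B : Type*} [CompleteBooleanAlgebra B] {S T : Set B} (h : S ⊆ T) (p : B) :
    proj T p ≤ proj S p :=
  sInf_le_sInf fun _ hx => ⟨h hx.1, hx.2⟩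

theorem Set.Infinite.exists_strictMono_mem {ι : Type*} [LinearOrder ι] [WellFoundedLT ι]
    {T : Set ι} (hT : T.Infinite) : ∃ g : ℕ → ι, StrictMono g ∧ ∀ n, g n ∈ T := by
  have := hT.to_subtype
  obtain ⟨g, hg | hg⟩ := Infinite.exists_strictMono_or_strictAnti T
  · exact ⟨fun n => g n, Subtype.strictMono_coe _ |>.comp hg, fun n => (g n).2⟩
  · exact (not_strictAnti_of_wellFoundedLT g hg).elim

theorem countableInterFilter_of_lt_card {κ : Type*} (l : Filter κ)
    (hκ : Cardinal.aleph0 < Cardinal.mk κ)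
    (hcomplete : ∀ S : Set (Set κ), Cardinal.mk S < Cardinal.mk κ → (∀ s ∈ S, s ∈ l) → ⋂₀ S ∈ l) :
    CountableInterFilter l :=
  ⟨fun S hS => hcomplete S (hS.le_aleph0.trans_lt hκ)⟩

/-- For `h γ = proj (P γ) p` this is the paper's `supp p`. -/
def stageSupport {ι β : Type*} [Preorder ι] (h : ι → β) (μ : ι) : Set ι :=
  {δ | δ ≤ μ ∧ ∀ γ < δ, h δ ≠ h γ}

section StageSupport

variable {ι β : Type*} [LinearOrder ι] [WellFoundedLT ι] [PartialOrder β] {h : ι → β} {μ : ι}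

/-- The witness is the least stage at which `h` takes the value `h δ`. -/
theorem exists_mem_stageSupport_of_ne (hh : AntitoneOn h (Set.Iic μ)) {γ δ : ι} (hγδ : γ ≤ δ)
    (hδμ : δ ≤ μ) (hne : h δ ≠ h γ) : ∃ ε ∈ stageSupport h μ, γ < ε ∧ ε ≤ δ := by
  obtain ⟨ε, hε, hmin⟩ := wellFounded_lt.has_min {e | h e = h δ} ⟨δ, rfl⟩
  have hεδ : ε ≤ δ := not_lt.1 (hmin δ rfl)
  have hγε : γ < ε := by
    by_contra! hεγ
    have hγμ := hγδ.trans hδμ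
    refine hne (le_antisymm (hh hγμ hδμ hγδ) ?_)
    exact hε ▸ hh (hεγ.trans hγμ) hγμ hεγ
  refine ⟨ε, ⟨hεδ.trans hδμ, fun γ' hγ' heq => hmin γ' ?_ hγ'⟩, hγε, hεδ⟩
  exact heq.symm.trans hε

theorem stageSupport_infinite (hh : AntitoneOn h (Set.Iic μ)) {g : ℕ → ι} (hg : StrictMono g)
    (hgμ : ∀ n, g n ≤ μ) (hmove : ∀ n, h (g (n + 1)) ≠ h (g n)) :
    (stageSupport h μ).Infinite := by
  choose ε hε hgε hεg using fun n =>
    exists_mem_stageSupport_of_ne hh (hg n.lt_succ_self).le (hgμ (n + 1)) (hmove n)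
  have hεmono : StrictMono ε :=
    strictMono_nat_of_lt_succ fun n => (hεg n).trans_lt (hgε (n + 1))
  exact Set.infinite_of_injective_forall_mem hεmono.injective hε

end StageSupport

theorem stmt_6_general {B : Type u} [CompleteBooleanAlgebra B] {κ : Type v}
    (μ : Ordinal) (P : Ordinal → Set B)
    (hmono : ∀ γ δ : Ordinal, γ ≤ δ → δ ≤ μ → P γ ⊆ P δ)
    (hκ : Cardinal.aleph0 < Cardinal.mk κ)
    (D : Ultrafilter κ)
    (hcomplete : ∀ S : Set (Set κ), Cardinal.mk S < Cardinal.mk κ →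
      (∀ s ∈ S, s ∈ D) → ⋂₀ S ∈ D)
    (f : κ → B)
    (hfin : ∀ α : κ,
      {δ : Ordinal | δ ≤ μ ∧ ∀ γ < δ, proj (P δ) (f α) ≠ proj (P γ) (f α)}.Finite) :
    {δ : Ordinal | δ ≤ μ ∧
        ∀ γ < δ, {α : κ | proj (P δ) (f α) = proj (P γ) (f α)} ∉ D}.Finite := by
  by_contra hinf
  obtain ⟨g, hg, hgD⟩ := Set.Infinite.exists_strictMono_mem hinf
  have := countableInterFilter_of_lt_card (D : Filter κ) hκ hcomplete
  have hmove : ∀ᶠ α in (D : Filter κ), ∀ n,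
      proj (P (g (n + 1))) (f α) ≠ proj (P (g n)) (f α) :=
    eventually_countable_forall.2 fun n =>
      Ultrafilter.compl_mem_iff_notMem.2 ((hgD (n + 1)).2 _ (hg n.lt_succ_self))
  obtain ⟨α, hα⟩ := hmove.exists
  have hanti : AntitoneOn (fun γ => proj (P γ) (f α)) (Set.Iic μ) :=
    fun γ _ δ hδ hγδ => proj_antitone (hmono γ δ hγδ hδ) (f α)
  exact stageSupport_infinite hanti hg (fun n => (hgD n).1) hα (hfin α)

/-- If `f : κ → B` has finite supports pointwise, then the support of its
class in the ultrapower iteration `((P_γ)^κ/D)_{γ≤μ}` is finite. -/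
theorem stmt_6 {B : Type u} [CompleteBooleanAlgebra B] {κ : Type v}
    (μ : Ordinal) (P : Ordinal → Set B)
    (hsub : ∀ γ ≤ μ, IsCompleteSubalg (P γ))
    (hmono : ∀ γ δ : Ordinal, γ ≤ δ → δ ≤ μ → P γ ⊆ P δ)
    (htop : P μ = Set.univ)
    (hκ : Cardinal.aleph0 < Cardinal.mk κ)
    (D : Ultrafilter κ)
    (hcomplete : ∀ S : Set (Set κ), Cardinal.mk S < Cardinal.mk κ →
      (∀ s ∈ S, s ∈ D) → ⋂₀ S ∈ D)
    (f : κ → B)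
    (hfin : ∀ α : κ,
      {δ : Ordinal | δ ≤ μ ∧ ∀ γ < δ, proj (P δ) (f α) ≠ proj (P γ) (f α)}.Finite) :
    {δ : Ordinal | δ ≤ μ ∧
        ∀ γ < δ, {α : κ | proj (P δ) (f α) = proj (P γ) (f α)} ∉ D}.Finite :=
  stmt_6_general μ P hmono hκ D hcomplete f hfin
end

section
/- Let B be a complete Boolean algebra and (P_γ)_{γ≤μ} a family of complete subalgebras of B indexed by the ordinals γ ≤ μ, with P_γ ⊆ P_δ whenever γ ≤ δ and P_μ = B. Assume there are sets D_γ ⊆ P_γ \ {⊥} for γ ≤ μ such that: (I) D_γ ⊆ D_δ for γ ≤ δ ≤ μ; (II) h_γ(p) ∈ D_γ for every γ ≤ μ and every p ∈ D_μ; (III) supp(p) is finite for every p ∈ D_μ; and each D_γ is dense in P_γ, i.e., every nonzero element of P_γ has a lower bound in D_γ. Then for every limit ordinal δ ≤ μ, the union ⋃_{γ<δ} P_γ completely embeds into P_δ: every nonzero p ∈ P_δ has a reduction to ⋃_{γ<δ} P_γ, i.e., there are γ₀ < δ and a nonzero p₀ ∈ P_{γ₀} such that every nonzero q ∈ ⋃_{γ<δ}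 P_γ with q ≤ p₀ satisfies q ⊓ p ≠ ⊥. -/
/-- The support of `p` with respect to the family `(P_γ)_{γ≤μ}`:
`supp(p) = {δ ≤ μ : h_δ(p) ≠ h_γ(p) for all γ < δ}`. -/
noncomputable def supp {B : Type u} [CompleteBooleanAlgebra B] (μ : Ordinal.{v})
    (P : Ordinal.{v} → Set B) (p : B) : Set Ordinal.{v} :=
  {δ | δ ≤ μ ∧ ∀ γ < δ, proj (P δ) p ≠ proj (P γ) p}

/-!
Take `d ∈ D_δ` below `p`. Only finitely many points of `supp(d)` lie below the limit `δ`, so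
there is `γ₀ < δ` above all of them, and every `h_γ(d)` with `γ < δ` already equals
`h_β(d)` for some support point `β ≤ γ`. Hence `h_γ(d)` is constant for `γ₀ ≤ γ < δ`, and
`p₀ = h_{γ₀}(d)` is a reduction: a nonzero `q ∈ P_γ` below `p₀` and disjoint from `d` would
give `d ≤ qᶜ ∈ P_γ`, so `q ≤ p₀ = h_γ(d) ≤ qᶜ`.
-/

theorem Order.IsSuccLimit.exists_lt_forall_lt_of_finite {α : Type*} [LinearOrder α] {δ : α}
    (hδ : IsSuccLimit δ) {s : Set α} (hs : s.Finite) (hsδ : s ⊆ Set.Iio δ) :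
    ∃ γ < δ, ∀ β ∈ s, β < γ := by
  induction s, hs using Set.Finite.induction_on with
  | empty =>
    obtain ⟨γ, hγ⟩ := hδ.nonempty_Iio
    exact ⟨γ, hγ, by simp⟩
  | @insert a s _ _ ih =>
    obtain ⟨γ, hγδ, hγ⟩ := ih ((Set.subset_insert a s).trans hsδ)
    obtain ⟨c, hcδ, hac⟩ := hδ.lt_iff_exists_lt.1 (hsδ (Set.mem_insert a s))
    refine ⟨max c γ, max_lt hcδ hγδ, ?_⟩
    rintro β (rfl | hβ)
    · exact lt_max_of_lt_left hac
    · exact lt_max_of_lt_right (hγ β hβ)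

section Proj

variable {B : Type u} [CompleteBooleanAlgebra B]

theorem le_proj (S : Set B) (p : B) : p ≤ proj S p :=
  le_sInf fun _ hx => hx.2

theorem proj_le_of_mem {S : Set B} {p x : B} (hx : x ∈ S) (hpx : p ≤ x) : proj S p ≤ x :=
  sInf_le ⟨hx, hpx⟩

theorem proj_anti {S T : Set B} (hST : S ⊆ T) (p : B) : proj T p ≤ proj S p :=
  sInf_le_sInf fun _ hx => ⟨hST hx.1, hx.2⟩

theorem proj_mem {S : Set B} (hS : ∀ T ⊆ S, sInf T ∈ S) (p : B) : proj S p ∈ S :=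
  hS _ fun _ hx => hx.1

theorem inf_ne_bot_of_le_proj {S : Set B} (hS : ∀ x ∈ S, xᶜ ∈ S) {p q : B} (hq : q ∈ S)
    (hq0 : q ≠ ⊥) (hqp : q ≤ proj S p) : q ⊓ p ≠ ⊥ := by
  intro hdisj
  have hpq : p ≤ qᶜ := (disjoint_iff.2 hdisj).symm.le_compl_right
  exact hq0 (le_compl_self.1 (hqp.trans (proj_le_of_mem (hS q hq) hpq)))

variable {μ : Ordinal.{v}} {P : Ordinal.{v} → Set B}

theorem exists_mem_supp_le_proj_eq {ε : Ordinal.{v}} (hε : ε ≤ μ) (p : B) :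
    ∃ β ∈ supp μ P p, β ≤ ε ∧ proj (P β) p = proj (P ε) p := by
  obtain ⟨β, ⟨hβε, hβeq⟩, hmin⟩ :=
    wellFounded_lt.has_min {γ | γ ≤ ε ∧ proj (P γ) p = proj (P ε) p} ⟨ε, le_rfl, rfl⟩
  exact ⟨β, ⟨hβε.trans hε, fun γ hγ heq => hmin γ ⟨hγ.le.trans hβε, heq ▸ hβeq⟩ hγ⟩, hβε, hβeq⟩

theorem exists_lt_proj_eq_of_supp_finite
    (hmono : ∀ γ δ : Ordinal.{v}, γ ≤ δ → δ ≤ μ → P γ ⊆ P δ) {δ : Ordinal.{v}} (hδμ : δ ≤ μ)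
    (hδ : Order.IsSuccLimit δ) {p : B} (hfin : (supp μ P p).Finite) :
    ∃ γ₀ < δ, ∀ γ, γ₀ ≤ γ → γ < δ → proj (P γ) p = proj (P γ₀) p := by
  obtain ⟨γ₀, hγ₀δ, hγ₀⟩ :=
    hδ.exists_lt_forall_lt_of_finite (hfin.inter_of_left _) Set.inter_subset_right
  refine ⟨γ₀, hγ₀δ, fun γ hγ₀γ hγδ => ?_⟩
  have hγμ : γ ≤ μ := hγδ.le.trans hδμ
  obtain ⟨β, hβ, hβγ, hβeq⟩ := exists_mem_supp_le_proj_eq hγμ p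
  have hβγ₀ : β < γ₀ := hγ₀ β ⟨hβ, hβγ.trans_lt hγδ⟩
  refine le_antisymm (proj_anti (hmono γ₀ γ hγ₀γ hγμ) p) ?_
  calc proj (P γ₀) p ≤ proj (P β) p := proj_anti (hmono β γ₀ hβγ₀.le (hγ₀δ.le.trans hδμ)) p
    _ = proj (P γ) p := hβeq

end Proj

theorem stmt_8_general {B : Type u} [CompleteBooleanAlgebra B]
    (μ : Ordinal.{v}) (P : Ordinal.{v} → Set B)
    (hsub : ∀ γ ≤ μ, IsCompleteSubalg (P γ))
    (hmono : ∀ γ δ : Ordinal.{v}, γ ≤ δ → δ ≤ μ → P γ ⊆ P δ)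
    (Ds : Ordinal.{v} → Set B)
    (hDsub : ∀ γ ≤ μ, Ds γ ⊆ P γ ∧ (⊥ : B) ∉ Ds γ)
    (hI : ∀ γ δ : Ordinal.{v}, γ ≤ δ → δ ≤ μ → Ds γ ⊆ Ds δ)
    (hIII : ∀ p ∈ Ds μ, (supp μ P p).Finite)
    (hdense : ∀ γ ≤ μ, ∀ p ∈ P γ, p ≠ ⊥ → ∃ d ∈ Ds γ, d ≤ p) :
    ∀ δ ≤ μ, Order.IsSuccLimit δ → ∀ p ∈ P δ, p ≠ ⊥ →
      ∃ γ₀ < δ, ∃ p₀ ∈ P γ₀, p₀ ≠ ⊥ ∧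
        ∀ q ∈ ⋃ γ ∈ Set.Iio δ, P γ, q ≠ ⊥ → q ≤ p₀ → q ⊓ p ≠ ⊥ := by
  intro δ hδμ hδ p hpP hp0
  obtain ⟨d, hdD, hdp⟩ := hdense δ hδμ p hpP hp0
  have hd0 : d ≠ ⊥ := fun h => (hDsub δ hδμ).2 (h ▸ hdD)
  obtain ⟨γ₀, hγ₀δ, hconst⟩ :=
    exists_lt_proj_eq_of_supp_finite hmono hδμ hδ (hIII d (hI δ μ hδμ le_rfl hdD))
  have hγ₀μ : γ₀ ≤ μ := hγ₀δ.le.trans hδμ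
  refine ⟨γ₀, hγ₀δ, proj (P γ₀) d, proj_mem (hsub γ₀ hγ₀μ).2.2.2.2 d,
    ne_bot_of_le_ne_bot hd0 (le_proj _ d), ?_⟩
  intro q hq hq0 hqp₀
  obtain ⟨γ, hγδ, hqγ⟩ := Set.mem_iUnion₂.1 hq
  have hmaxδ : max γ γ₀ < δ := max_lt hγδ hγ₀δ
  have hmaxμ : max γ γ₀ ≤ μ := hmaxδ.le.trans hδμ
  have hqd : q ⊓ d ≠ ⊥ :=
    inf_ne_bot_of_le_proj (hsub _ hmaxμ).2.2.1 (hmono γ _ (le_max_left γ γ₀) hmaxμ hqγ) hq0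
      (hconst _ (le_max_right γ γ₀) hmaxδ ▸ hqp₀)
  exact ne_bot_of_le_ne_bot hqd (inf_le_inf_left q hdp)

/-- In an iteration with finite supports, at every limit ordinal `δ ≤ μ`
the union `⋃_{γ<δ} P_γ` completely embeds into `P_δ`: every nonzero `p ∈ P_δ` has a
reduction. -/
theorem stmt_8 {B : Type u} [CompleteBooleanAlgebra B]
    (μ : Ordinal.{v}) (P : Ordinal.{v} → Set B)
    (hsub : ∀ γ ≤ μ, IsCompleteSubalg (P γ))
    (hmono : ∀ γ δ : Ordinal.{v}, γ ≤ δ → δ ≤ μ → P γ ⊆ P δ)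
    (htop : P μ = Set.univ)
    (Ds : Ordinal.{v} → Set B)
    (hDsub : ∀ γ ≤ μ, Ds γ ⊆ P γ ∧ (⊥ : B) ∉ Ds γ)
    (hI : ∀ γ δ : Ordinal.{v}, γ ≤ δ → δ ≤ μ → Ds γ ⊆ Ds δ)
    (hII : ∀ γ ≤ μ, ∀ p ∈ Ds μ, proj (P γ) p ∈ Ds γ)
    (hIII : ∀ p ∈ Ds μ, (supp μ P p).Finite)
    (hdense : ∀ γ ≤ μ, ∀ p ∈ P γ, p ≠ ⊥ → ∃ d ∈ Ds γ, d ≤ p) :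
    ∀ δ ≤ μ, Order.IsSuccLimit δ → ∀ p ∈ P δ, p ≠ ⊥ →
      ∃ γ₀ < δ, ∃ p₀ ∈ P γ₀, p₀ ≠ ⊥ ∧
        ∀ q ∈ ⋃ γ ∈ Set.Iio δ, P γ, q ≠ ⊥ → q ≤ p₀ → q ⊓ p ≠ ⊥ :=
  stmt_8_general μ P hsub hmono Ds hDsub hI hIII hdense
end
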